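/- Let G be a connected simple graph on n ≥ 5 vertices with minimum degree δ(G) = n-3, and let S = {u,v,w,z} be a 4-subset of vertices such that G[S] is isomorphic to the disjoint union of two edges (2K_2). Then d_G(S) = 4. -/

import Mathlib

open SimpleGraph

variable {V : Type*}

/-- The set of non-cut vertices of a graph: vertices whose deletion leaves the
graph (induced on the remaining vertices) connected. -/
def noncutVerts (G : SimpleGraph V) : Set V :=
  {v | (G.induce ({v}ᶜ : Set V)).Connected}

/-- The Steiner distance of a finite vertex set `S`: the minimum number of edges
of a connected subgraph of `G` whose vertex set contains `S`. -/
noncomputable def steinerDist [Fintype V] (G : SimpleGraph V) (S : Finset V) : ℕ :=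
  sInf {m | ∃ H : G.Subgraph, H.Connected ∧ ↑S ⊆ H.verts ∧ H.edgeSet.ncard = m}

/-- The Steiner `k`-diameter of `G`: the maximum Steiner distance over all
`k`-element subsets of the vertex set. -/
noncomputable def sdiam [Fintype V] (G : SimpleGraph V) (k : ℕ) : ℕ :=
  (Finset.powersetCard k (Finset.univ : Finset V)).sup (fun S => steinerDist G S)

/-
Every vertex of `S` has two non-neighbours in `S`, so when `δ(G) = n - 3` it is adjacent to every
vertex outside `S`. Any fifth vertex `x` therefore yields the path `v u x w z`, of length four.
Conversely, a connected subgraph with at most three edges has at most four vertices; if it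
contains `S` it lives inside `G[S] ≅ 2K₂`, which is disconnected.
-/

namespace SimpleGraph

variable {G : SimpleGraph V}

theorem adj_of_card_sub_three_le_minDegree [Fintype V] [DecidableRel G.Adj]
    (hδ : Fintype.card V - 3 ≤ G.minDegree) {a b c y : V} (hab : a ≠ b) (hac : a ≠ c)
    (hbc : b ≠ c) (hb : ¬ G.Adj a b) (hc : ¬ G.Adj a c) (hya : y ≠ a) (hyb : y ≠ b)
    (hyc : y ≠ c) : G.Adj a y := by
  classical
  by_contra hy
  have hsub : G.neighborFinset a ⊆ ({a, b, c, y} : Finset V)ᶜ := by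
    intro t ht
    rw [mem_neighborFinset] at ht
    simp only [Finset.mem_compl, Finset.mem_insert, Finset.mem_singleton, not_or]
    refine ⟨(G.ne_of_adj ht).symm, ?_, ?_, ?_⟩ <;> rintro rfl <;> contradiction
  have hfour : ({a, b, c, y} : Finset V).card = 4 := by
    simp [Finset.card_insert_of_notMem, *, hya.symm, hyb.symm, hyc.symm]
  have hdeg := (Finset.card_le_card hsub).trans_eq (Finset.card_compl _)
  have hle := Finset.card_le_univ ({a, b, c, y} : Finset V)
  rw [card_neighborFinset_eq_degree, hfour] at hdeg
  have := G.minDegree_le_degree a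
  omega

namespace Subgraph

theorem Connected.ncard_verts_le_ncard_edgeSet_add_one {H : G.Subgraph} (hH : H.Connected) :
    H.verts.ncard ≤ H.edgeSet.ncard + 1 := by
  have := hH.coe.card_vert_le_card_edgeSet_add_one
  rwa [Nat.card_coe_set_eq, Nat.card_coe_set_eq, ← Set.ncard_image_of_injective _
    (Sym2.map.injective Subtype.val_injective), H.image_coe_edgeSet_coe] at this

theorem Connected.card_le_ncard_edgeSet [Finite V] {H : G.Subgraph} (hH : H.Connected)
    {S : Finset V} (hS : ↑S ⊆ H.verts) (hSc : ¬ ((⊤ : G.Subgraph).induce S).Connected) :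
    S.card ≤ H.edgeSet.ncard := by
  by_contra! hlt
  have hverts : ↑S = H.verts := by
    refine Set.eq_of_subset_of_ncard_le hS ?_ (Set.toFinite _)
    have := hH.ncard_verts_le_ncard_edgeSet_add_one
    rw [Set.ncard_coe_finset]
    omega
  refine hSc (hH.mono ⟨hverts.ge, fun a b hab => ?_⟩ hverts.symm)
  rw [hverts]
  exact ⟨H.edge_vert hab, H.edge_vert hab.symm, H.adj_sub hab⟩

end Subgraph

theorem not_connected_top_induce_of_not_adj [DecidableEq V] {u v w z : V} (huv : u ≠ v)
    (huw : u ≠ w) (huz : u ≠ z) (hvw : v ≠ w) (hvz : v ≠ z) (hwz : w ≠ z)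
    (huw' : ¬ G.Adj u w) (huz' : ¬ G.Adj u z) (hvw' : ¬ G.Adj v w) (hvz' : ¬ G.Adj v z) :
    ¬ ((⊤ : G.Subgraph).induce ↑({u, v, w, z} : Finset V)).Connected := by
  intro hc
  have hE : ((⊤ : G.Subgraph).induce ↑({u, v, w, z} : Finset V)).edgeSet ⊆
      {s(u, v), s(w, z)} := by
    rintro ⟨a, b⟩ hab
    simp only [Subgraph.mem_edgeSet, Subgraph.induce_adj, Subgraph.top_adj, Finset.coe_insert,
      Finset.coe_singleton, Set.mem_insert_iff, Set.mem_singleton_iff] at hab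
    obtain ⟨ha, hb, hab⟩ := hab
    rcases ha with rfl | rfl | rfl | rfl <;> rcases hb with rfl | rfl | rfl | rfl <;>
      simp_all [Sym2.eq_swap, G.adj_comm]
  have hcard : ({u, v, w, z} : Finset V).card = 4 := by simp [Finset.card_insert_of_notMem, *]
  have hverts := hc.ncard_verts_le_ncard_edgeSet_add_one
  rw [Subgraph.induce_verts, Set.ncard_coe_finset, hcard] at hverts
  have hedges := (Set.ncard_le_ncard hE (Set.toFinite _)).trans (Set.ncard_insert_le _ _)
  rw [Set.ncard_singleton] at hedges
  omega

section SteinerDist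

variable [Fintype V] {S : Finset V}

theorem steinerDist_le_ncard_edgeSet {H : G.Subgraph} (hH : H.Connected) (hS : ↑S ⊆ H.verts) :
    steinerDist G S ≤ H.edgeSet.ncard :=
  Nat.sInf_le ⟨H, hH, hS, rfl⟩

theorem steinerDist_le_length {a b : V} (p : G.Walk a b) (hS : ∀ x ∈ S, x ∈ p.support) :
    steinerDist G S ≤ p.length := by
  classical
  refine (steinerDist_le_ncard_edgeSet p.toSubgraph_connected
    fun x hx => p.mem_verts_toSubgraph.mpr (hS x hx)).trans ?_
  rw [Walk.edgeSet_toSubgraph, ← p.coe_edges_toFinset, Set.ncard_coe_finset, ← p.length_edges]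
  exact List.toFinset_card_le _

theorem le_steinerDist {k : ℕ} (hne : ∃ H : G.Subgraph, H.Connected ∧ ↑S ⊆ H.verts)
    (h : ∀ H : G.Subgraph, H.Connected → ↑S ⊆ H.verts → k ≤ H.edgeSet.ncard) :
    k ≤ steinerDist G S := by
  obtain ⟨H, hH, hS⟩ := hne
  exact le_csInf ⟨_, H, hH, hS, rfl⟩ (by rintro _ ⟨H, hH, hS, rfl⟩; exact h H hH hS)

theorem card_le_steinerDist (hne : ∃ H : G.Subgraph, H.Connected ∧ ↑S ⊆ H.verts)
    (hS : ¬ ((⊤ : G.Subgraph).induce S).Connected) : S.card ≤ steinerDist G S :=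
  le_steinerDist hne fun _ hH hSH => hH.card_le_ncard_edgeSet hSH hS

end SteinerDist

end SimpleGraph

theorem stmt_10_general [Fintype V] [DecidableEq V] (G : SimpleGraph V) [DecidableRel G.Adj]
    (hn : 5 ≤ Fintype.card V)
    (hδ : G.minDegree = Fintype.card V - 3)
    (u v w z : V) (huv : u ≠ v) (huw : u ≠ w) (huz : u ≠ z)
    (hvw : v ≠ w) (hvz : v ≠ z) (hwz : w ≠ z)
    (h1 : G.Adj u v) (h2 : G.Adj w z)
    (h3 : ¬ G.Adj u w) (h4 : ¬ G.Adj u z) (h5 : ¬ G.Adj v w) (h6 : ¬ G.Adj v z) :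
    steinerDist G {u, v, w, z} = 4 := by
  have hS : ({u, v, w, z} : Finset V).card = 4 := by simp [Finset.card_insert_of_notMem, *]
  obtain ⟨x, -, hx⟩ := Finset.exists_mem_notMem_of_card_lt_card
    (s := {u, v, w, z}) (t := Finset.univ) (by rw [hS, Finset.card_univ]; omega)
  simp only [Finset.mem_insert, Finset.mem_singleton, not_or] at hx
  obtain ⟨hxu, hxv, hxw, hxz⟩ := hx
  have hux : G.Adj u x := G.adj_of_card_sub_three_le_minDegree hδ.ge huw huz hwz h3 h4 hxu hxw hxz
  have hwx : G.Adj w x := G.adj_of_card_sub_three_le_minDegree hδ.ge huw.symm hvw.symm huv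
    (mt G.adj_symm h3) (mt G.adj_symm h5) hxw hxu hxv
  let p : G.Walk v z := .cons h1.symm (.cons hux (.cons hwx.symm (.cons h2 .nil)))
  have hp : ∀ y ∈ ({u, v, w, z} : Finset V), y ∈ p.support := by simp [p]
  refine le_antisymm (steinerDist_le_length p hp) (hS ▸ card_le_steinerDist ?_ ?_)
  · exact ⟨p.toSubgraph, p.toSubgraph_connected,
      fun y hy => p.mem_verts_toSubgraph.mpr (hp y hy)⟩
  · exact not_connected_top_induce_of_not_adj huv huw huz hvw hvz hwz h3 h4 h5 h6

theorem stmt_10 [Fintype V] [DecidableEq V] (G : SimpleGraph V) [DecidableRel G.Adj]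
    (hn : 5 ≤ Fintype.card V) (hG : G.Connected)
    (hδ : G.minDegree = Fintype.card V - 3)
    (u v w z : V) (huv : u ≠ v) (huw : u ≠ w) (huz : u ≠ z)
    (hvw : v ≠ w) (hvz : v ≠ z) (hwz : w ≠ z)
    (h1 : G.Adj u v) (h2 : G.Adj w z)
    (h3 : ¬ G.Adj u w) (h4 : ¬ G.Adj u z) (h5 : ¬ G.Adj v w) (h6 : ¬ G.Adj v z) :
    steinerDist G {u, v, w, z} = 4 :=
  stmt_10_general G hn hδ u v w z huv huw huz hvw hvz hwz h1 h2 h3 h4 h5 h6
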